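/- arXiv:1710.10760 — 7 statements merged into one kernel-verified Lean document; each statement's English description precedes it below -/
import Mathlib

section
/- If a family B of subsets of [n] satisfies ∑_{A ∈ B} 1/C(n,|A|) ≤ k and B contains a set whose cardinality is not among the k sizes corresponding to the k largest levels of 2^[n], then |B| ≤ Σ(n,k) − 1. -/
/-- `sigmaNK n k` is the sum of the `k` largest binomial coefficients `C(n,i)`. -/
def sigmaNK (n k : ℕ) : ℕ :=
  ((Finset.range (n + 1)).powersetCard k).sup (fun s => ∑ i ∈ s, n.choose i)

theorem stmt1 (n k : ℕ) (hk : k ≤ n + 1) (B : Finset (Finset (Fin n)))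
    (hB : ∑ A ∈ B, (1 : ℝ) / (n.choose A.card : ℝ) ≤ (k : ℝ))
    (hbad : ∃ A ∈ B, ∀ s ∈ (Finset.range (n + 1)).powersetCard k,
      (∑ i ∈ s, n.choose i) = sigmaNK n k → A.card ∉ s) :
    B.card ≤ sigmaNK n k - 1 := by
  classical
  obtain ⟨A0, hA0B, hA0⟩ := hbad
  set i0 := A0.card with hi0def
  have hcardle : ∀ A : Finset (Fin n), A.card ≤ n := fun A => by
    simpa using Finset.card_le_univ A
  have hi0n : i0 ≤ n := hcardle A0
  have hCpos : ∀ i ≤ n, (0:ℝ) < (n.choose i : ℝ) := fun i hi => by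
    exact_mod_cast Nat.choose_pos hi
  rcases Nat.eq_zero_or_pos k with rfl | hkpos
  · exfalso
    have hpos : (0:ℝ) < ∑ A ∈ B, (1:ℝ)/(n.choose A.card : ℝ) := by
      apply Finset.sum_pos'
      · intro A hA
        have := hCpos A.card (hcardle A)
        positivity
      · exact ⟨A0, hA0B, by
          have := hCpos A0.card (hcardle A0)
          positivity⟩
    simp only [Nat.cast_zero] at hB
    linarith
  -- get optimal s
  have hne : ((Finset.range (n+1)).powersetCard k).Nonempty := by
    rw [Finset.powersetCard_nonempty]
    simpa using hk
  obtain ⟨s, hsmem, hssup⟩ :=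
    Finset.exists_mem_eq_sup _ hne (fun s => ∑ i ∈ s, n.choose i)
  obtain ⟨hsub, hcard⟩ := Finset.mem_powersetCard.mp hsmem
  have hsne : s.Nonempty := Finset.card_pos.mp (hcard ▸ hkpos)
  obtain ⟨j0, hj0s, hj0min⟩ := Finset.exists_min_image s (fun i => n.choose i) hsne
  set c := n.choose j0 with hcdef
  have hi0s : i0 ∉ s := hA0 s hsmem hssup.symm
  have hi0r : i0 ∈ Finset.range (n+1) := Finset.mem_range.mpr (by omega)
  set E := ∑ x ∈ s.erase j0, n.choose x with hEdef
  have hEc : E + c = ∑ x ∈ s, n.choose x := Finset.sum_erase_add s _ hj0s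
  -- swap construction
  have hkey : ∀ i ∈ Finset.range (n+1), i ∉ s →
      insert i (s.erase j0) ∈ (Finset.range (n+1)).powersetCard k ∧
      (∑ x ∈ insert i (s.erase j0), n.choose x) = n.choose i + E := by
    intro i hir his
    have hnotmem : i ∉ s.erase j0 := fun hx => his (Finset.mem_of_mem_erase hx)
    refine ⟨Finset.mem_powersetCard.mpr ⟨?_, ?_⟩, Finset.sum_insert hnotmem⟩
    · intro x hx
      rcases Finset.mem_insert.mp hx with rfl | hx
      · exact hir
      · exact hsub (Finset.mem_of_mem_erase hx)
    · rw [Finset.card_insert_of_notMem hnotmem, Finset.card_erase_of_mem hj0s, hcard]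
      omega
  have hswap : ∀ i ∈ Finset.range (n+1), i ∉ s → n.choose i ≤ c := by
    intro i hir his
    obtain ⟨hmem, hsum⟩ := hkey i hir his
    have hle : ∑ x ∈ insert i (s.erase j0), n.choose x ≤ sigmaNK n k :=
      Finset.le_sup (f := fun t => ∑ i ∈ t, n.choose i) hmem
    have hsig : sigmaNK n k = ∑ x ∈ s, n.choose x := hssup
    omega
  have hi0lt : n.choose i0 < c := by
    rcases lt_or_eq_of_le (hswap i0 hi0r hi0s) with h | h
    · exact h
    · exfalso
      obtain ⟨hmem, hsum⟩ := hkey i0 hi0r hi0s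
      have hsig : sigmaNK n k = ∑ x ∈ s, n.choose x := hssup
      have hsum2 : (∑ x ∈ insert i0 (s.erase j0), n.choose x) = sigmaNK n k := by
        omega
      exact hA0 _ hmem hsum2 (Finset.mem_insert_self _ _)
  -- fibers
  set T := Finset.range (n+1) with hTdef
  set m : ℕ → ℕ := fun i => (B.filter fun A => A.card = i).card with hmdef
  have hmapsto : ∀ A ∈ B, A.card ∈ T := fun A _ =>
    Finset.mem_range.mpr (by have := hcardle A; omega)
  have hcardB : B.card = ∑ i ∈ T, m i :=
    Finset.card_eq_sum_card_fiberwise hmapsto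
  have hsumB : ∑ i ∈ T, (m i : ℝ) * (1/(n.choose i : ℝ)) ≤ (k : ℝ) := by
    have h1 : ∑ i ∈ T, ∑ A ∈ B.filter (fun A => A.card = i), (1:ℝ)/(n.choose A.card : ℝ)
        = ∑ A ∈ B, (1:ℝ)/(n.choose A.card : ℝ) :=
      Finset.sum_fiberwise_of_maps_to hmapsto _
    have h2 : ∀ i ∈ T, ∑ A ∈ B.filter (fun A => A.card = i), (1:ℝ)/(n.choose A.card : ℝ)
        = (m i : ℝ) * (1/(n.choose i : ℝ)) := by
      intro i _
      rw [Finset.sum_congr rfl (fun A hA => by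
        rw [(Finset.mem_filter.mp hA).2])]
      rw [Finset.sum_const, nsmul_eq_mul]
    calc ∑ i ∈ T, (m i : ℝ) * (1/(n.choose i : ℝ))
        = ∑ i ∈ T, ∑ A ∈ B.filter (fun A => A.card = i), (1:ℝ)/(n.choose A.card : ℝ) :=
          (Finset.sum_congr rfl h2).symm
      _ = ∑ A ∈ B, (1:ℝ)/(n.choose A.card : ℝ) := h1
      _ ≤ (k:ℝ) := hB
  have hmle : ∀ i, m i ≤ n.choose i := by
    intro i
    have hsub2 : B.filter (fun A => A.card = i) ⊆ Finset.univ.powersetCard i := by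
      intro A hA
      exact Finset.mem_powersetCard_univ.mpr (Finset.mem_filter.mp hA).2
    have := Finset.card_le_card hsub2
    rwa [Finset.card_powersetCard, Finset.card_univ, Fintype.card_fin] at this
  have hm0 : 1 ≤ m i0 := by
    have : A0 ∈ B.filter (fun A => A.card = i0) := Finset.mem_filter.mpr ⟨hA0B, rfl⟩
    exact Finset.card_pos.mpr ⟨A0, this⟩
  -- real arithmetic
  have hsubT : s ⊆ T := hsub
  have hcR : (0:ℝ) < (c:ℝ) := hCpos j0 (by have := Finset.mem_range.mp (hsubT hj0s); omega)
  have hCi0 : (0:ℝ) < (n.choose i0 : ℝ) := hCpos i0 hi0n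
  set ε : ℝ := ((c:ℝ) - (n.choose i0 : ℝ)) / (n.choose i0 : ℝ) with hεdef
  have hεpos : 0 < ε := by
    apply div_pos _ hCi0
    have : (n.choose i0 : ℝ) < (c:ℝ) := by exact_mod_cast hi0lt
    linarith
  have hi0ds : i0 ∈ T \ s := Finset.mem_sdiff.mpr ⟨hi0r, hi0s⟩
  -- step 1
  have step1 : (∑ i ∈ T \ s, (m i : ℝ)) + ε
      ≤ (c:ℝ) * ∑ i ∈ T \ s, (m i : ℝ) / (n.choose i : ℝ) := by
    have hf : ∀ i ∈ T \ s, (0:ℝ) ≤ (c:ℝ) * ((m i : ℝ)/(n.choose i : ℝ)) - (m i : ℝ) := by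
      intro i hi
      obtain ⟨hiT, his⟩ := Finset.mem_sdiff.mp hi
      have hin : i ≤ n := by have := Finset.mem_range.mp hiT; omega
      have hCi : (0:ℝ) < (n.choose i : ℝ) := hCpos i hin
      have hle : (n.choose i : ℝ) ≤ (c:ℝ) := by exact_mod_cast hswap i hiT his
      have h1 : (m i : ℝ) = ((m i : ℝ)/(n.choose i : ℝ)) * (n.choose i : ℝ) := by
        field_simp
      have h2 : (0:ℝ) ≤ (m i : ℝ)/(n.choose i : ℝ) := by positivity
      nlinarith
    have hsingle : ε ≤ (c:ℝ) * ((m i0 : ℝ)/(n.choose i0 : ℝ)) - (m i0 : ℝ) := by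
      have hm1 : (1:ℝ) ≤ (m i0 : ℝ) := by exact_mod_cast hm0
      have hlt : (n.choose i0 : ℝ) < (c:ℝ) := by exact_mod_cast hi0lt
      rw [hεdef]
      rw [div_le_iff₀ hCi0]
      have h1 : (c:ℝ) * ((m i0 : ℝ)/(n.choose i0 : ℝ)) - (m i0 : ℝ)
          = (m i0 : ℝ) * ((c:ℝ) - (n.choose i0 : ℝ)) / (n.choose i0 : ℝ) := by
        field_simp
      rw [h1, div_mul_cancel₀ _ (ne_of_gt hCi0)]
      nlinarith
    have hsum2 : ε ≤ ∑ i ∈ T \ s, ((c:ℝ) * ((m i : ℝ)/(n.choose i : ℝ)) - (m i : ℝ)) := by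
      calc ε ≤ (c:ℝ) * ((m i0 : ℝ)/(n.choose i0 : ℝ)) - (m i0 : ℝ) := hsingle
        _ ≤ _ := Finset.single_le_sum hf hi0ds
    rw [Finset.sum_sub_distrib] at hsum2
    rw [Finset.mul_sum]
    linarith
  -- step 2
  have hsplit : (∑ i ∈ T \ s, (m i : ℝ)/(n.choose i : ℝ))
      + (∑ i ∈ s, (m i : ℝ)/(n.choose i : ℝ))
      = ∑ i ∈ T, (m i : ℝ)/(n.choose i : ℝ) := Finset.sum_sdiff hsubT
  have hsumB' : ∑ i ∈ T, (m i : ℝ)/(n.choose i : ℝ) ≤ (k:ℝ) := by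
    calc ∑ i ∈ T, (m i : ℝ)/(n.choose i : ℝ)
        = ∑ i ∈ T, (m i : ℝ) * (1/(n.choose i : ℝ)) := by
          apply Finset.sum_congr rfl; intro i _; ring
      _ ≤ (k:ℝ) := hsumB
  set W : ℝ := ∑ i ∈ s, (m i : ℝ)/(n.choose i : ℝ) with hWdef
  have step2 : ∑ i ∈ T \ s, (m i : ℝ)/(n.choose i : ℝ) ≤ (k:ℝ) - W := by
    linarith
  -- step 3
  have step3 : (∑ i ∈ s, (m i : ℝ)) + (c:ℝ) * ((k:ℝ) - W)
      ≤ ∑ i ∈ s, (n.choose i : ℝ) := by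
    have hks : (k:ℝ) = ∑ i ∈ s, (1:ℝ) := by
      rw [Finset.sum_const, nsmul_eq_mul, mul_one, hcard]
    rw [hks, hWdef, ← Finset.sum_sub_distrib, Finset.mul_sum, ← Finset.sum_add_distrib]
    apply Finset.sum_le_sum
    intro i hi
    have hin : i ≤ n := by have := Finset.mem_range.mp (hsubT hi); omega
    have hCi : (0:ℝ) < (n.choose i : ℝ) := hCpos i hin
    have hcle : (c:ℝ) ≤ (n.choose i : ℝ) := by exact_mod_cast hj0min i hi
    have hmlei : (m i : ℝ) ≤ (n.choose i : ℝ) := by exact_mod_cast hmle i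
    have h1 : (0:ℝ) ≤ 1 - (m i : ℝ)/(n.choose i : ℝ) := by
      rw [sub_nonneg, div_le_one hCi]; exact hmlei
    have h2 : (c:ℝ) * (1 - (m i : ℝ)/(n.choose i : ℝ))
        ≤ (n.choose i : ℝ) * (1 - (m i : ℝ)/(n.choose i : ℝ)) :=
      mul_le_mul_of_nonneg_right hcle h1
    have h3 : (n.choose i : ℝ) * (1 - (m i : ℝ)/(n.choose i : ℝ))
        = (n.choose i : ℝ) - (m i : ℝ) := by
      field_simp
    linarith
  -- combine
  have hsplitm : (∑ i ∈ T \ s, (m i : ℝ)) + (∑ i ∈ s, (m i : ℝ))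
      = ∑ i ∈ T, (m i : ℝ) := Finset.sum_sdiff hsubT
  have hfinal : (∑ i ∈ T, (m i : ℝ)) < ∑ i ∈ s, (n.choose i : ℝ) := by
    have h1 : (c:ℝ) * (∑ i ∈ T \ s, (m i : ℝ)/(n.choose i : ℝ)) ≤ (c:ℝ) * ((k:ℝ) - W) :=
      mul_le_mul_of_nonneg_left step2 (le_of_lt hcR)
    linarith
  have hsigN : sigmaNK n k = ∑ i ∈ s, n.choose i := hssup
  have hsig : (sigmaNK n k : ℝ) = ∑ i ∈ s, (n.choose i : ℝ) := by
    rw [hsigN]; push_cast; ring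
  have hltR : (B.card : ℝ) < (sigmaNK n k : ℝ) := by
    rw [hsig, hcardB]
    push_cast
    exact hfinal
  have hlt : B.card < sigmaNK n k := by exact_mod_cast hltR
  omega
end

section
/- For every n ≥ 2 and k ≥ 2, the family consisting of the k largest levels of the Boolean lattice 2^[n] contains no induced copy of the poset Y_k and no induced copy of Y_k'. -/
/-- The family `A ⊆ 2^[n]` contains an induced copy of the poset
`Y_k`: `x_1 < x_2 < … < x_k < y, z` with `y, z` incomparable. -/
def hasInducedY (n k : ℕ) (A : Finset (Finset (Fin n))) : Prop :=
  ∃ x : Fin k → Finset (Fin n), ∃ y z : Finset (Fin n),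
    (∀ i, x i ∈ A) ∧ y ∈ A ∧ z ∈ A ∧
    (∀ i j : Fin k, i < j → x i ⊂ x j) ∧
    (∀ i, x i ⊂ y) ∧ (∀ i, x i ⊂ z) ∧
    ¬ y ⊆ z ∧ ¬ z ⊆ y

/-- The family `A ⊆ 2^[n]` contains an induced copy of the dual poset
`Y_k'`: `y, z < x_k < … < x_1` with `y, z` incomparable. -/
def hasInducedY' (n k : ℕ) (A : Finset (Finset (Fin n))) : Prop :=
  ∃ x : Fin k → Finset (Fin n), ∃ y z : Finset (Fin n),
    (∀ i, x i ∈ A) ∧ y ∈ A ∧ z ∈ A ∧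
    (∀ i j : Fin k, i < j → x j ⊂ x i) ∧
    (∀ i, y ⊂ x i) ∧ (∀ i, z ⊂ x i) ∧
    ¬ y ⊆ z ∧ ¬ z ⊆ y

lemma chain_card {α : Type*} [DecidableEq α] {k : ℕ} (x : Fin k → Finset α)
    (h : ∀ i j : Fin k, i < j → x i ⊂ x j) :
    ∀ m (hm : m < k) (h0 : 0 < k), (x ⟨0, h0⟩).card + m ≤ (x ⟨m, hm⟩).card := by
  intro m
  induction m with
  | zero => intro hm h0; simp
  | succ p ih =>
    intro hm h0
    have hp : p < k := Nat.lt_of_succ_lt hm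
    have h1 : x ⟨p, hp⟩ ⊂ x ⟨p + 1, hm⟩ := h _ _ (by simp)
    have := Finset.card_lt_card h1
    have := ih hp h0
    omega

theorem stmt2 (n k : ℕ) (hn : 2 ≤ n) (hk : 2 ≤ k) :
    ¬ hasInducedY n k (Finset.univ.filter
        (fun S : Finset (Fin n) =>
          S.card ∈ Finset.Icc ((n - k + 1) / 2) ((n - k + 1) / 2 + k - 1))) ∧
    ¬ hasInducedY' n k (Finset.univ.filter
        (fun S : Finset (Fin n) =>
          S.card ∈ Finset.Icc ((n - k + 1) / 2) ((n - k + 1) / 2 + k - 1))) := by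
  set a := (n - k + 1) / 2 with ha
  have hmem : ∀ S : Finset (Fin n), S ∈ (Finset.univ.filter
        (fun S : Finset (Fin n) =>
          S.card ∈ Finset.Icc a (a + k - 1))) → a ≤ S.card ∧ S.card ≤ a + k - 1 := by
    intro S hS
    simp only [Finset.mem_filter, Finset.mem_Icc] at hS
    exact hS.2
  have h0k : 0 < k := by omega
  constructor
  · rintro ⟨x, y, z, hx, hy, hz, hchain, hxy, hxz, -, -⟩
    have hlast : (x ⟨0, h0k⟩).card + (k - 1) ≤ (x ⟨k - 1, by omega⟩).card :=
      chain_card x hchain (k - 1) (by omega) h0k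
    have h1 := hmem _ (hx ⟨0, h0k⟩)
    have h2 := hmem _ hy
    have h3 := Finset.card_lt_card (hxy ⟨k - 1, by omega⟩)
    omega
  · rintro ⟨x, y, z, hx, hy, hz, hchain, hxy, hxz, -, -⟩
    -- reverse chain: define x' i = x (rev i)
    have hchain' : ∀ i j : Fin k, i < j → x (Fin.rev i) ⊂ x (Fin.rev j) := by
      intro i j hij
      exact hchain _ _ (Fin.rev_lt_rev.mpr hij)
    have hlast : (x (Fin.rev ⟨0, h0k⟩)).card + (k - 1) ≤
        (x (Fin.rev ⟨k - 1, by omega⟩)).card :=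
      chain_card (fun i => x (Fin.rev i)) hchain' (k - 1) (by omega) h0k
    have h1 := hmem _ (hx (Fin.rev ⟨k - 1, by omega⟩))
    have h2 := hmem _ hy
    have h3 := Finset.card_lt_card (hxy (Fin.rev ⟨0, h0k⟩))
    omega
end

section
/- Let k ≥ 2 and n > k with n ≢ k (mod 2). If A ⊆ 2^[n] contains the empty set together with all sets of size i with (n−k)/2 < i < (n+k)/2 (i.e., the k middle levels of 2^[n]), then A contains an induced copy of Y_k. -/
theorem stmt3 (n k : ℕ) (hk : 2 ≤ k) (hn : k < n) (hpar : n % 2 ≠ k % 2)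
    (A : Finset (Finset (Fin n))) (h0 : ∅ ∈ A)
    (hlev : ∀ S : Finset (Fin n),
      S.card ∈ Finset.Icc ((n - k + 1) / 2) ((n - k + 1) / 2 + k - 1) → S ∈ A) :
    hasInducedY n k A := by
  set m := (n - k + 1) / 2 with hmdef
  have hm1 : 1 ≤ m := by omega
  have hmn : m + k ≤ n := by omega
  -- initial segments
  set f : ℕ → Finset (Fin n) := fun t => Finset.univ.filter (fun a => a.val < t) with hf
  have hmemf : ∀ t (a : Fin n), a ∈ f t ↔ a.val < t := by
    intro t a; simp [hf]
  have hf0 : f 0 = ∅ := by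
    ext a; simp [hmemf]
  have hcard : ∀ t, t ≤ n → (f t).card = t := by
    intro t ht
    have hb : (f t).card = (Finset.range t).card := by
      apply Finset.card_bij (fun a _ => a.val)
      · intro a ha; rw [Finset.mem_range]; exact (hmemf t a).mp ha
      · intro a _ b _ hab; exact Fin.val_injective hab
      · intro b hb
        rw [Finset.mem_range] at hb
        exact ⟨⟨b, lt_of_lt_of_le hb ht⟩, (hmemf t _).mpr hb, rfl⟩
    rw [hb, Finset.card_range]
  have hsub : ∀ s t, s ≤ t → f s ⊆ f t := by
    intro s t h a ha
    rw [hmemf] at ha ⊢; omega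
  have hssub : ∀ s t, s < t → t ≤ n → f s ⊂ f t := by
    intro s t h ht
    refine ⟨hsub _ _ h.le, fun hc => ?_⟩
    have h1 : (⟨s, by omega⟩ : Fin n) ∈ f t := (hmemf _ _).mpr (by simpa)
    have h2 := (hmemf s _).mp (hc h1)
    simp at h2
  -- the chain sizes
  set g : ℕ → ℕ := fun i => if i = 0 then 0 else m + i - 1 with hg
  have hgle : ∀ i, i ≤ k - 1 → g i ≤ m + k - 2 := by
    intro i hi; simp only [hg]; split_ifs <;> omega
  have e : Fin n := ⟨m + k - 1, by omega⟩
  refine ⟨fun i => f (g i.val), f (m + k - 1),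
    f (m + k - 2) ∪ {(⟨m + k - 1, by omega⟩ : Fin n)}, ?_, ?_, ?_, ?_, ?_, ?_, ?_, ?_⟩
  · -- x i ∈ A
    intro i
    rcases Nat.eq_zero_or_pos i.val with h | h
    · simp only [hg, h, if_pos rfl, hf0]; exact h0
    · have hik : i.val ≤ k - 1 := by omega
      apply hlev
      rw [Finset.mem_Icc, hcard _ (by have := hgle i.val hik; omega)]
      simp only [hg, if_neg (by omega : ¬ i.val = 0)]
      omega
  · -- y ∈ A
    apply hlev
    rw [Finset.mem_Icc, hcard _ (by omega)]
    omega
  · -- z ∈ A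
    apply hlev
    rw [Finset.mem_Icc]
    have hd : (⟨m + k - 1, by omega⟩ : Fin n) ∉ f (m + k - 2) := by
      rw [hmemf]; simp; omega
    rw [Finset.union_comm, ← Finset.insert_eq, Finset.card_insert_of_notMem hd,
      hcard _ (by omega)]
    omega
  · -- chain
    intro i j hij
    apply hssub
    · have hj : j.val ≠ 0 := by omega
      simp only [hg, if_neg hj]
      split_ifs <;> omega
    · have := hgle j.val (by omega)
      omega
  · -- x i ⊂ y
    intro i
    apply hssub
    · have := hgle i.val (by omega); omega
    · omega
  · -- x i ⊂ z
    intro i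
    have h1 : f (g i.val) ⊆ f (m + k - 2) := hsub _ _ (hgle i.val (by omega))
    refine ⟨h1.trans Finset.subset_union_left, fun hc => ?_⟩
    have he : (⟨m + k - 1, by omega⟩ : Fin n) ∈ f (m + k - 2) ∪ {(⟨m + k - 1, by omega⟩ : Fin n)} := by
      simp
    have := (hmemf _ _).mp (hc he)
    simp at this
    have := hgle i.val (by omega)
    omega
  · -- ¬ y ⊆ z
    intro hc
    have hw : (⟨m + k - 2, by omega⟩ : Fin n) ∈ f (m + k - 1) := by
      rw [hmemf]; simp; omega
    have := hc hw
    rw [Finset.mem_union, hmemf, Finset.mem_singleton, Fin.ext_iff] at this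
    simp at this
    omega
  · -- ¬ z ⊆ y
    intro hc
    have he : (⟨m + k - 1, by omega⟩ : Fin n) ∈ f (m + k - 2) ∪ {(⟨m + k - 1, by omega⟩ : Fin n)} := by
      simp
    have := (hmemf _ _).mp (hc he)
    simp at this
end

section
/- Let C be an ascending chain and C' a descending chain of cyclic intervals of [n] that cross at a set X (i.e., X ∈ C ∩ C'). Then any Y ∈ C and Z ∈ C' with |Y| > |X| and |Z| > |X| are incomparable under inclusion (neither contains the other), provided Y ≠ [n] and Z ≠ [n]. Similarly any Y ∈ C, Z ∈ C' with |Y| < |X|, |Z| < |X| are incomparable. -/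
/-- The cyclic interval `{a, a+1, …, a+r-1}` (arithmetic mod `n`) of the
cyclically arranged ground set `Fin n`. -/
def cycInt (n : ℕ) (a : Fin n) (r : ℕ) : Finset (Fin n) :=
  haveI : NeZero n := ⟨(Fin.pos a).ne'⟩
  (Finset.range r).image (fun j : ℕ => a + Fin.ofNat n j)

/-- `I(n)`: the family of nonempty proper cyclic intervals of `Fin n`. -/
def cyclicIntervals (n : ℕ) : Finset (Finset (Fin n)) :=
  (Finset.univ ×ˢ Finset.Icc 1 (n - 1)).image (fun p : Fin n × ℕ => cycInt n p.1 p.2)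

/-- The ascending chain `{{i},{i,i+1},…,{i,…,i+n-2}}` of cyclic intervals starting at `i`. -/
def ascChain (n : ℕ) (i : Fin n) : Finset (Finset (Fin n)) :=
  (Finset.Icc 1 (n - 1)).image (fun r => cycInt n i r)

/-- The descending chain `{{i},{i-1,i},…,{i-n+2,…,i}}` of cyclic intervals ending at `i`. -/
def descChain (n : ℕ) (i : Fin n) : Finset (Finset (Fin n)) :=
  haveI : NeZero n := ⟨(Fin.pos i).ne'⟩
  (Finset.Icc 1 (n - 1)).image (fun r => cycInt n (i - Fin.ofNat n (r - 1 : ℕ)) r)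

open Fin.NatCast Fin.CommRing

section helpers
set_option linter.unusedSectionVars false

variable {n : ℕ} [NeZero n]

lemma mem_cycInt {a x : Fin n} {r : ℕ} (hr : r ≤ n) :
    x ∈ cycInt n a r ↔ (x - a).val < r := by
  simp only [cycInt, Finset.mem_image, Finset.mem_range, Fin.ofNat_eq_cast]
  constructor
  · rintro ⟨k, hk, rfl⟩
    rw [add_sub_cancel_left, Fin.val_natCast, Nat.mod_eq_of_lt (lt_of_lt_of_le hk hr)]
    exact hk
  · intro h
    exact ⟨(x - a).val, h, by rw [Fin.cast_val_eq_self, add_sub_cancel]⟩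

lemma card_cycInt (a : Fin n) {r : ℕ} (hr : r ≤ n) : (cycInt n a r).card = r := by
  rw [cycInt, Finset.card_image_of_injOn, Finset.card_range]
  intro x hx y hy h
  simp only [Finset.coe_range, Set.mem_Iio] at hx hy
  have := add_left_cancel h
  have hx' : x % n = y % n := by
    have := congrArg Fin.val this
    simpa [Fin.val_natCast] using this
  rwa [Nat.mod_eq_of_lt (lt_of_lt_of_le hx hr), Nat.mod_eq_of_lt (lt_of_lt_of_le hy hr)] at hx'

lemma natCast_sub_val {k₁ k₂ : ℕ} (h₁ : k₁ < n) (h₂ : k₂ < n) :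
    ((k₁ : Fin n) - (k₂ : Fin n)).val = if k₂ ≤ k₁ then k₁ - k₂ else n - (k₂ - k₁) := by
  split_ifs with h
  · rw [← Nat.cast_sub h, Fin.val_natCast, Nat.mod_eq_of_lt (by omega)]
  · have : (k₁ : Fin n) - (k₂ : Fin n) = ((n + k₁ - k₂ : ℕ) : Fin n) := by
      rw [sub_eq_iff_eq_add, ← Nat.cast_add]
      have : n + k₁ - k₂ + k₂ = n + k₁ := by omega
      rw [this, Nat.cast_add, Fin.natCast_self, zero_add]
    rw [this, Fin.val_natCast, Nat.mod_eq_of_lt (by omega)]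
    omega

lemma cycInt_start_inj {a b : Fin n} {r : ℕ} (h1 : 1 ≤ r) (hrn : r ≤ n - 1)
    (h : cycInt n a r = cycInt n b r) : a = b := by
  have hn2 : 2 ≤ n := by
    rcases Nat.lt_or_ge n 2 with h' | h'
    · interval_cases n <;> omega
    · exact h'
  have hrn' : r ≤ n := by omega
  have ha : a ∈ cycInt n b r := by
    rw [← h, mem_cycInt hrn', sub_self]; exact lt_of_lt_of_le (by simp) h1
  rw [mem_cycInt hrn'] at ha
  by_contra hab
  have hd : (a - b) ≠ 0 := sub_ne_zero.mpr hab
  have hd1 : 1 ≤ (a - b).val := Nat.one_le_iff_ne_zero.mpr (fun h0 => hd (Fin.ext (by rw [h0]; simp)))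
  have hnm : a - 1 ∉ cycInt n a r := by
    rw [mem_cycInt hrn']
    have : a - 1 - a = ((0 : ℕ) : Fin n) - ((1 : ℕ) : Fin n) := by push_cast; ring
    rw [this, natCast_sub_val (by omega) (by omega)]
    split_ifs with h' <;> omega
  rw [h, mem_cycInt hrn'] at hnm
  have : a - 1 - b = a - b - 1 := by ring
  rw [this] at hnm
  have hv : (a - b - 1).val = (a - b).val - 1 := by
    have e : a - b - 1 = (((a - b).val : ℕ) : Fin n) - ((1 : ℕ) : Fin n) := by
      rw [Fin.cast_val_eq_self]; push_cast; ring
    rw [e, natCast_sub_val (a - b).isLt (by omega)]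
    split_ifs with h' <;> omega
  omega

end helpers


theorem stmt5 (n : ℕ) (i j : Fin n) (X Y Z : Finset (Fin n))
    (hXa : X ∈ ascChain n i) (hXd : X ∈ descChain n j)
    (hY : Y ∈ ascChain n i) (hZ : Z ∈ descChain n j) :
    (X.card < Y.card → X.card < Z.card → Y ≠ Finset.univ → Z ≠ Finset.univ →
      ¬ Y ⊆ Z ∧ ¬ Z ⊆ Y) ∧
    (Y.card < X.card → Z.card < X.card → ¬ Y ⊆ Z ∧ ¬ Z ⊆ Y) := by
  haveI : NeZero n := ⟨(Fin.pos i).ne'⟩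
  have hnpos : 0 < n := Fin.pos i
  simp only [ascChain, descChain, Finset.mem_image, Finset.mem_Icc, Fin.ofNat_eq_cast] at hXa hXd hY hZ
  obtain ⟨r, ⟨hr1, hrn⟩, hXr⟩ := hXa
  obtain ⟨s, ⟨hs1, hsn⟩, hXs⟩ := hXd
  obtain ⟨p, ⟨hp1, hpn⟩, hYp⟩ := hY
  obtain ⟨q, ⟨hq1, hqn⟩, hZq⟩ := hZ
  have hsr : r = s := by
    have := congrArg Finset.card (hXr.trans hXs.symm)
    rwa [card_cycInt _ (by omega), card_cycInt _ (by omega)] at this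
  subst hsr
  have hji : i = j - ((r - 1 : ℕ) : Fin n) :=
    cycInt_start_inj hr1 hrn (hXr.trans hXs.symm)
  have hj : j = i + ((r - 1 : ℕ) : Fin n) := by rw [hji]; ring
  subst hXr; subst hYp; subst hZq
  have hcX : (cycInt n i r).card = r := card_cycInt _ (by omega)
  have hcY : (cycInt n i p).card = p := card_cycInt _ (by omega)
  have hcZ : (cycInt n (j - ((q - 1 : ℕ) : Fin n)) q).card = q := card_cycInt _ (by omega)
  rw [hcX, hcY, hcZ]
  have keyY : ∀ (k₁ t : ℕ), k₁ < n → t ≤ n →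
      ((i + (k₁ : Fin n)) ∈ cycInt n i t ↔ k₁ < t) := by
    intro k₁ t h₁ ht
    rw [mem_cycInt ht, add_sub_cancel_left, Fin.val_natCast, Nat.mod_eq_of_lt h₁]
  have key : ∀ (k₁ k₂ t : ℕ), k₁ < n → k₂ < n → t ≤ n →
      ((i + (k₁ : Fin n)) ∈ cycInt n (i + (k₂ : Fin n)) t ↔
        (if k₂ ≤ k₁ then k₁ - k₂ else n - (k₂ - k₁)) < t) := by
    intro k₁ k₂ t h₁ h₂ ht
    rw [mem_cycInt ht]
    have e : i + (k₁ : Fin n) - (i + (k₂ : Fin n)) = (k₁ : Fin n) - (k₂ : Fin n) := by ring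
    rw [e, natCast_sub_val h₁ h₂]
  constructor
  · -- big case
    intro h1 h2 _ _
    have hZstart : j - ((q - 1 : ℕ) : Fin n) = i + ((n - (q - r) : ℕ) : Fin n) := by
      have e : ((n - (q - r) : ℕ) : Fin n) + ((q - 1 : ℕ) : Fin n) = ((r - 1 : ℕ) : Fin n) := by
        rw [← Nat.cast_add]
        have e2 : n - (q - r) + (q - 1) = n + (r - 1) := by omega
        rw [e2, Nat.cast_add, Fin.natCast_self, zero_add]
      rw [hj, ← e]; ring
    rw [hZstart]
    have hw1Y : i + ((r : ℕ) : Fin n) ∈ cycInt n i p :=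
      (keyY r p (by omega) (by omega)).mpr (by omega)
    have hw1Z : i + ((r : ℕ) : Fin n) ∉ cycInt n (i + ((n - (q - r) : ℕ) : Fin n)) q := by
      rw [key r (n - (q - r)) q (by omega) (by omega) (by omega)]
      split_ifs <;> omega
    have hw2Z : i + ((n - 1 : ℕ) : Fin n) ∈ cycInt n (i + ((n - (q - r) : ℕ) : Fin n)) q := by
      rw [key (n - 1) (n - (q - r)) q (by omega) (by omega) (by omega)]
      split_ifs <;> omega
    have hw2Y : i + ((n - 1 : ℕ) : Fin n) ∉ cycInt n i p := by
      rw [keyY (n - 1) p (by omega) (by omega)]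
      omega
    exact ⟨fun hs => hw1Z (hs hw1Y), fun hs => hw2Y (hs hw2Z)⟩
  · -- small case
    intro h1 h2
    have hZstart : j - ((q - 1 : ℕ) : Fin n) = i + ((r - q : ℕ) : Fin n) := by
      have e : ((r - q : ℕ) : Fin n) = ((r - 1 : ℕ) : Fin n) - ((q - 1 : ℕ) : Fin n) := by
        rw [← Nat.cast_sub (by omega : q - 1 ≤ r - 1)]
        congr 1; omega
      rw [hj, e]; ring
    rw [hZstart]
    have hw1Y : i ∈ cycInt n i p := by
      rw [mem_cycInt (by omega : p ≤ n)]
      simp only [sub_self, Fin.val_zero]; omega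
    have hw1Z : i ∉ cycInt n (i + ((r - q : ℕ) : Fin n)) q := by
      rw [mem_cycInt (by omega : q ≤ n)]
      have e : i - (i + ((r - q : ℕ) : Fin n)) = ((0 : ℕ) : Fin n) - ((r - q : ℕ) : Fin n) := by
        push_cast; ring
      rw [e, natCast_sub_val (by omega) (by omega)]
      split_ifs <;> omega
    have hw2Z : i + ((r - 1 : ℕ) : Fin n) ∈ cycInt n (i + ((r - q : ℕ) : Fin n)) q := by
      rw [key (r - 1) (r - q) q (by omega) (by omega) (by omega)]
      split_ifs <;> omega
    have hw2Y : i + ((r - 1 : ℕ) : Fin n) ∉ cycInt n i p := by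
      rw [keyY (r - 1) p (by omega) (by omega)]
      omega
    exact ⟨fun hs => hw1Z (hs hw1Y), fun hs => hw2Y (hs hw2Z)⟩
end

section
/- For all k ≥ 2 and n ≥ k+1, if A ⊆ 2^[n] has no induced copy of Y_k and no induced copy of Y_k', and both ∅ ∈ A and [n] ∈ A, then A \ {∅, [n]} has no induced copy of Y_{k−1} and no induced copy of Y_{k−1}'. -/
theorem stmt9 (n k : ℕ) (hk : 2 ≤ k) (hn : k + 1 ≤ n)
    (A : Finset (Finset (Fin n)))
    (hY : ¬ hasInducedY n k A) (hY' : ¬ hasInducedY' n k A)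
    (h0 : ∅ ∈ A) (h1 : Finset.univ ∈ A) :
    ¬ hasInducedY n (k - 1) ((A.erase ∅).erase Finset.univ) ∧
    ¬ hasInducedY' n (k - 1) ((A.erase ∅).erase Finset.univ) := by
  obtain ⟨m, rfl⟩ : ∃ m, k = m + 1 := ⟨k - 1, (Nat.succ_pred_eq_of_pos (by omega)).symm⟩
  simp only [Nat.add_sub_cancel]
  have hmem : ∀ s : Finset (Fin n), s ∈ (A.erase ∅).erase Finset.univ →
      s ∈ A ∧ s ≠ ∅ ∧ s ≠ Finset.univ := by
    intro s hs
    rw [Finset.mem_erase, Finset.mem_erase] at hs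
    exact ⟨hs.2.2, hs.2.1, hs.1⟩
  constructor
  · rintro ⟨x, y, z, hxA, hyA, hzA, hchain, hxy, hxz, hyz, hzy⟩
    apply hY
    refine ⟨Fin.cons ∅ x, y, z, ?_, (hmem y hyA).1, (hmem z hzA).1, ?_, ?_, ?_, hyz, hzy⟩
    · intro i
      refine Fin.cases ?_ ?_ i
      · simpa using h0
      · intro j; simpa using (hmem _ (hxA j)).1
    · intro i j hij
      induction j using Fin.cases with
      | zero => exact absurd hij (Fin.not_lt_zero i)
      | succ j' =>
        induction i using Fin.cases with
        | zero =>
          simp only [Fin.cons_zero, Fin.cons_succ]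
          rw [Finset.empty_ssubset, Finset.nonempty_iff_ne_empty]
          exact (hmem _ (hxA j')).2.1
        | succ i' =>
          simp only [Fin.cons_succ]
          exact hchain i' j' (Fin.succ_lt_succ_iff.mp hij)
    · intro i
      refine Fin.cases ?_ ?_ i
      · simpa [Finset.empty_ssubset, Finset.nonempty_iff_ne_empty] using (hmem y hyA).2.1
      · intro j; simpa using hxy j
    · intro i
      refine Fin.cases ?_ ?_ i
      · simpa [Finset.empty_ssubset, Finset.nonempty_iff_ne_empty] using (hmem z hzA).2.1
      · intro j; simpa using hxz j
  · rintro ⟨x, y, z, hxA, hyA, hzA, hchain, hxy, hxz, hyz, hzy⟩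
    apply hY'
    refine ⟨Fin.cons Finset.univ x, y, z, ?_, (hmem y hyA).1, (hmem z hzA).1, ?_, ?_, ?_, hyz, hzy⟩
    · intro i
      refine Fin.cases ?_ ?_ i
      · simpa using h1
      · intro j; simpa using (hmem _ (hxA j)).1
    · intro i j hij
      induction j using Fin.cases with
      | zero => exact absurd hij (Fin.not_lt_zero i)
      | succ j' =>
        induction i using Fin.cases with
        | zero =>
          simp only [Fin.cons_zero, Fin.cons_succ]
          rw [Finset.ssubset_univ_iff]
          exact (hmem _ (hxA j')).2.2
        | succ i' =>
          simp only [Fin.cons_succ]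
          exact hchain i' j' (Fin.succ_lt_succ_iff.mp hij)
    · intro i
      refine Fin.cases ?_ ?_ i
      · simpa [Finset.ssubset_univ_iff] using (hmem y hyA).2.2
      · intro j; simpa using hxy j
    · intro i
      refine Fin.cases ?_ ?_ i
      · simpa [Finset.ssubset_univ_iff] using (hmem z hzA).2.2
      · intro j; simpa using hxz j
end

section
/- For k = 1 (forbidding V = Y_1 and Λ = Y_1' as induced subposets): the family consisting of C([n−1], ⌊(n−1)/2⌋) together with {F ∪ {n} : F ∈ C([n−1], ⌊(n−1)/2⌋)} contains no induced copy of V and no induced copy of Λ, and has size 2·C(n−1, ⌊(n−1)/2⌋). -/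
theorem stmt16 (n : ℕ) (hn : 1 ≤ n) :
    let last : Fin n := ⟨n - 1, by omega⟩
    let base : Finset (Finset (Fin n)) :=
      (Finset.univ.erase last).powersetCard ((n - 1) / 2)
    let A : Finset (Finset (Fin n)) := base ∪ base.image (insert last)
    ¬ hasInducedY n 1 A ∧ ¬ hasInducedY' n 1 A ∧
      A.card = 2 * (n - 1).choose ((n - 1) / 2) := by
  intro last base A
  set m := (n - 1) / 2 with hm
  -- membership characterizations
  have hbase : ∀ S : Finset (Fin n), S ∈ base ↔ last ∉ S ∧ S.card = m := by
    intro S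
    simp [base, Finset.mem_powersetCard, Finset.subset_erase, and_comm, hm]
  have himg : ∀ S : Finset (Fin n),
      S ∈ base.image (insert last) ↔ last ∈ S ∧ S.card = m + 1 := by
    intro S
    constructor
    · rintro hS
      simp only [Finset.mem_image] at hS
      obtain ⟨F, hF, rfl⟩ := hS
      obtain ⟨hlF, hcF⟩ := (hbase F).1 hF
      exact ⟨Finset.mem_insert_self _ _, by rw [Finset.card_insert_of_notMem hlF, hcF]⟩
    · rintro ⟨h1, h2⟩
      simp only [Finset.mem_image]
      refine ⟨S.erase last, (hbase _).2 ⟨Finset.notMem_erase _ _, ?_⟩,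
        Finset.insert_erase h1⟩
      rw [Finset.card_erase_of_mem h1, h2]; omega
  have hA : ∀ S : Finset (Fin n),
      S ∈ A ↔ (last ∉ S ∧ S.card = m) ∨ (last ∈ S ∧ S.card = m + 1) := by
    intro S
    simp only [A, Finset.mem_union, hbase, himg]
  -- unique successor / predecessor
  have succ : ∀ x y : Finset (Fin n), x ∈ A → y ∈ A → x ⊂ y →
      y = insert last x := by
    intro x y hx hy hxy
    have hc := Finset.card_lt_card hxy
    rcases (hA x).1 hx with ⟨hlx, hcx⟩ | ⟨hlx, hcx⟩
    · rcases (hA y).1 hy with ⟨hly, hcy⟩ | ⟨hly, hcy⟩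
      · omega
      · -- y has card m+1, contains last; x ⊆ y, last ∉ x
        have hxsub : x ⊆ y.erase last := Finset.subset_erase.2 ⟨hxy.subset, hlx⟩
        have hce : (y.erase last).card = m := by
          rw [Finset.card_erase_of_mem hly, hcy]; omega
        have hx_eq : x = y.erase last :=
          Finset.eq_of_subset_of_card_le hxsub (by omega)
        rw [hx_eq, Finset.insert_erase hly]
    · rcases (hA y).1 hy with ⟨hly, hcy⟩ | ⟨hly, hcy⟩ <;> omega
  have pred : ∀ x y : Finset (Fin n), x ∈ A → y ∈ A → y ⊂ x →
      y = x.erase last := by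
    intro x y hx hy hxy
    have hc := Finset.card_lt_card hxy
    rcases (hA x).1 hx with ⟨hlx, hcx⟩ | ⟨hlx, hcx⟩
    · rcases (hA y).1 hy with ⟨hly, hcy⟩ | ⟨hly, hcy⟩ <;> omega
    · rcases (hA y).1 hy with ⟨hly, hcy⟩ | ⟨hly, hcy⟩
      · have hysub : y ⊆ x.erase last := Finset.subset_erase.2 ⟨hxy.subset, hly⟩
        have hce : (x.erase last).card = m := by
          rw [Finset.card_erase_of_mem hlx, hcx]; omega
        exact Finset.eq_of_subset_of_card_le hysub (by omega)
      · omega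
  refine ⟨?_, ?_, ?_⟩
  · rintro ⟨x, y, z, hx, hy, hz, -, hxy, hxz, hyz, -⟩
    have h1 := succ (x 0) y (hx 0) hy (hxy 0)
    have h2 := succ (x 0) z (hx 0) hz (hxz 0)
    exact hyz (by rw [h1, h2])
  · rintro ⟨x, y, z, hx, hy, hz, -, hyx, hzx, hyz, -⟩
    have h1 := pred (x 0) y (hx 0) hy (hyx 0)
    have h2 := pred (x 0) z (hx 0) hz (hzx 0)
    exact hyz (by rw [h1, h2])
  · have hdisj : Disjoint base (base.image (insert last)) := by
      rw [Finset.disjoint_left]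
      intro S hS hS'
      exact ((hbase S).1 hS).1 ((himg S).1 hS').1
    have hinj : Set.InjOn (insert last) (base : Set (Finset (Fin n))) := by
      intro a ha b hb hab
      rw [Finset.mem_coe] at ha hb
      have hla := ((hbase a).1 ha).1
      have hlb := ((hbase b).1 hb).1
      rw [← Finset.erase_insert hla, ← Finset.erase_insert hlb, hab]
    have hcb : base.card = (n - 1).choose m := by
      rw [Finset.card_powersetCard, Finset.card_erase_of_mem (Finset.mem_univ _),
        Finset.card_univ, Fintype.card_fin]
    rw [Finset.card_union_of_disjoint hdisj, Finset.card_image_of_injOn hinj, hcb]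
    ring
end

section
/- If n ≡ k (mod 2) and A ⊆ 2^[n] consists of all sets from the k−1 middle levels L_2, ..., L_k together with a subfamily C ⊆ L_1 ∪ L_{k+1} with |C| = |L_1| = |L_{k+1}|, where L_1, ..., L_{k+1} are the k+1 largest levels of 2^[n] ordered by set size, and moreover C ∩ L_1 ≠ ∅, then A ∪ {∅} contains an induced copy of Y_k. -/
private lemma aux_not_mem_take {α : Type*} (l : List α) (h : l.Nodup) {i j : ℕ}
    (hi : i < l.length) (hj : j ≤ i) : l.get ⟨i, hi⟩ ∉ l.take j := by
  intro hmem
  obtain ⟨idx, hidx, heq⟩ := List.mem_iff_getElem.mp hmem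
  rw [List.getElem_take] at heq
  have h1 : idx < j := by simp [List.length_take] at hidx; omega
  have h2 := (List.Nodup.getElem_inj_iff h).mp heq
  omega

private lemma aux_mem_take {α : Type*} (l : List α) {j i : ℕ} (h : i < j)
    (hj : j ≤ l.length) : l.get ⟨i, by omega⟩ ∈ l.take j := by
  have h3 : (l.take j)[i]'(by simp [List.length_take]; omega) = l[i] := List.getElem_take ..
  rw [List.get_eq_getElem, ← h3]
  exact List.getElem_mem ..

theorem stmt17 (n k : ℕ) (hk : 2 ≤ k) (hn : k + 2 ≤ n) (hpar : n % 2 = k % 2)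
    (C : Finset (Finset (Fin n)))
    (hCsub : ∀ S ∈ C, S.card = (n - k) / 2 ∨ S.card = (n - k) / 2 + k)
    (hCcard : C.card = n.choose ((n - k) / 2))
    (hCL1 : ∃ S ∈ C, S.card = (n - k) / 2) :
    hasInducedY n k (insert ∅
      ((Finset.univ.filter (fun S : Finset (Fin n) =>
          S.card ∈ Finset.Icc ((n - k) / 2 + 1) ((n - k) / 2 + k - 1))) ∪ C)) := by
  
  obtain ⟨S, hSC, hScard⟩ := hCL1
  set m := (n - k) / 2 with hm
  have hmk : m + k ≤ n := by omega
  have hm1 : 1 ≤ m := by omega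
  have hSc : Sᶜ.card = m + k := by
    rw [Finset.card_compl, hScard]
    simp only [Fintype.card_fin]
    omega
  set l := Sᶜ.sort (· ≤ ·) with hl
  have hnd : l.Nodup := Sᶜ.sort_nodup _
  have hlen : l.length = m + k := by rw [hl, Finset.length_sort, hSc]
  have hmemS : ∀ a ∈ l, a ∉ S := by
    intro a ha
    have := (Finset.mem_sort (α := Fin n) (· ≤ ·)).1 ha
    simpa using this
  -- the tower of sets
  set f : ℕ → Finset (Fin n) := fun j => S ∪ (l.take j).toFinset with hf
  have hdisj : ∀ j, Disjoint S (l.take j).toFinset := by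
    intro j
    rw [Finset.disjoint_right]
    intro a ha
    exact hmemS a (List.mem_of_mem_take (by simpa using ha))
  have hcard : ∀ j, j ≤ m + k → (f j).card = m + j := by
    intro j hj
    rw [hf]
    rw [Finset.card_union_of_disjoint (hdisj j),
      List.toFinset_card_of_nodup (hnd.sublist (List.take_sublist j l)),
      List.length_take, hScard, hlen]
    omega
  have hsubf : ∀ i j, i ≤ j → f i ⊆ f j := by
    intro i j hij
    apply Finset.union_subset_union_right
    intro a ha
    rw [List.mem_toFinset] at ha ⊢
    have : a ∈ List.take i (List.take j l) := by rwa [List.take_take, min_eq_left hij]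
    exact List.mem_of_mem_take this
  have hssf : ∀ i j, i < j → j ≤ m + k → f i ⊂ f j := by
    intro i j hij hj
    refine (hsubf i j hij.le).ssubset_of_ne ?_
    intro he
    have h1 := hcard i (by omega)
    have h2 := hcard j hj
    rw [he] at h1
    omega
  have hf0 : f 0 = S := by simp [hf]
  -- indices of the two top witnesses
  have hk2 : k - 2 < l.length := by omega
  have hk1 : k - 1 < l.length := by omega
  set a := l.get ⟨k - 2, hk2⟩ with ha
  set b := l.get ⟨k - 1, hk1⟩ with hb
  -- definitions of the copy
  set y := f (k - 1) with hy
  set z := f (k - 2) ∪ {b} with hz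
  have hbz : b ∉ f (k - 2) := by
    intro hbf
    rw [hf, Finset.mem_union] at hbf
    rcases hbf with h | h
    · exact hmemS b (List.get_mem l _) h
    · exact aux_not_mem_take l hnd hk1 (show k - 2 ≤ k - 1 by omega) (by simpa [hb] using h)
  have hzcard : z.card = m + k - 1 := by
    rw [hz, Finset.union_comm, ← Finset.insert_eq, Finset.card_insert_of_notMem hbz,
      hcard (k - 2) (by omega)]
    omega
  have hay : a ∈ y := by
    rw [hy, hf, Finset.mem_union, List.mem_toFinset]
    exact Or.inr (aux_mem_take l (by omega) (by omega))
  have hanz : a ∉ z := by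
    rw [hz, Finset.mem_union, Finset.mem_singleton]
    rintro (h | h)
    · rw [hf, Finset.mem_union] at h
      rcases h with h | h
      · exact hmemS a (List.get_mem l _) h
      · exact aux_not_mem_take l hnd hk2 le_rfl (by simpa [ha] using h)
    · have := (List.Nodup.get_inj_iff hnd).mp h
      simp only [Fin.mk.injEq] at this
      omega
  have hbny : b ∉ y := by
    rw [hy, hf, Finset.mem_union] at *
    rintro (h | h)
    · exact hmemS b (List.get_mem l _) h
    · exact aux_not_mem_take l hnd hk1 le_rfl (by simpa [hb] using h)
  -- the chain
  refine ⟨fun i => if i.val = 0 then ∅ else f (i.val - 1), y, z, ?_, ?_, ?_, ?_, ?_, ?_, ?_, ?_⟩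
  · -- membership of chain
    intro i
    by_cases h0 : i.val = 0
    · simp [h0]
    · beta_reduce
      rw [if_neg h0]
      rw [Finset.mem_insert]
      right
      rw [Finset.mem_union]
      by_cases h1 : i.val = 1
      · right
        rw [h1]
        simpa [hf0] using hSC
      · left
        rw [Finset.mem_filter]
        refine ⟨Finset.mem_univ _, ?_⟩
        rw [hcard (i.val - 1) (by omega), Finset.mem_Icc]
        have := i.isLt
        omega
  · -- y mem
    rw [Finset.mem_insert]
    right
    rw [Finset.mem_union]
    left
    rw [Finset.mem_filter]
    refine ⟨Finset.mem_univ _, ?_⟩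
    rw [hy, hcard (k - 1) (by omega), Finset.mem_Icc]
    omega
  · -- z mem
    rw [Finset.mem_insert]
    right
    rw [Finset.mem_union]
    left
    rw [Finset.mem_filter]
    refine ⟨Finset.mem_univ _, ?_⟩
    rw [hzcard, Finset.mem_Icc]
    omega
  · -- chain increasing
    intro i j hij
    have hij' : i.val < j.val := hij
    have hj0 : j.val ≠ 0 := by omega
    by_cases h0 : i.val = 0
    · beta_reduce
      rw [if_pos h0, if_neg hj0]
      rw [Finset.empty_ssubset, ← Finset.card_pos, hcard (j.val - 1) (by have := j.isLt; omega)]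
      omega
    · beta_reduce
      rw [if_neg h0, if_neg hj0]
      exact hssf _ _ (by omega) (by have := j.isLt; omega)
  · -- x i ⊂ y
    intro i
    by_cases h0 : i.val = 0
    · beta_reduce
      rw [if_pos h0]
      rw [Finset.empty_ssubset, hy, ← Finset.card_pos, hcard (k - 1) (by omega)]
      omega
    · beta_reduce
      rw [if_neg h0]
      exact hssf _ _ (by have := i.isLt; omega) (by omega)
  · -- x i ⊂ z
    intro i
    have hsubz : f (k - 2) ⊆ z := by rw [hz]; exact Finset.subset_union_left
    by_cases h0 : i.val = 0
    · beta_reduce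
      rw [if_pos h0]
      rw [Finset.empty_ssubset, ← Finset.card_pos, hzcard]
      omega
    · beta_reduce
      rw [if_neg h0]
      refine ((hsubf (i.val - 1) (k - 2) (by have := i.isLt; omega)).trans hsubz).ssubset_of_ne ?_
      intro he
      have h1 := hcard (i.val - 1) (by have := i.isLt; omega)
      rw [he, hzcard] at h1
      have := i.isLt
      omega
  · exact fun h => hanz (h hay)
  · exact fun h => hbny (h (by rw [hz]; exact Finset.mem_union_right _ (Finset.mem_singleton_self b)))
end
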